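/- arXiv:1704.05269 — 5 statements merged into one kernel-verified Lean document; each statement's English description precedes it below -/
import Mathlib

section
/- For real numbers ρ ∈ [0,1), if for all x the public distribution satisfies R[x] ∈ [(1-ρ)Pr[x], (1+ρ)Pr[x]], and for a given observation o the gap δ(o) = min over y ≠ o of (Pr[o|o]/Pr[o])·(Pr[y]/Pr[y|o]) − 1 is positive, and ρ < δ(o)/(2+δ(o)), then for all y ≠ o we have Pr[o|o]/R[o] > Pr[y|o]/R[y]; that is, truthful reporting maximizes expected PTS payment. -/
/-! Cross-multiplying, truthfulness means `post o y * R o < post o o * R y`. Closeness bounds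
the left side by `(1 + ρ) Pr o · post o y` and the right side from below by
`(1 - ρ) Pr y · post o o`, while the gap gives `(1 + δ) Pr o · post o y ≤ post o o · Pr y`.
So it suffices that `1 + ρ < (1 + δ)(1 - ρ)`, which is exactly `ρ (2 + δ) < δ`. -/

lemma one_add_lt_one_add_mul_one_sub {ρ δ : ℝ} (hδ : 0 < 2 + δ) (h : ρ < δ / (2 + δ)) :
    1 + ρ < (1 + δ) * (1 - ρ) := by
  have := (lt_div_iff₀ hδ).mp h
  linarith

lemma mul_le_mul_of_le_div_mul_div {a b p q c : ℝ} (hp : 0 < p) (hb : 0 < b)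
    (h : c ≤ a / p * (q / b)) : c * (p * b) ≤ a * q := by
  calc c * (p * b) ≤ a / p * (q / b) * (p * b) := by gcongr
    _ = a * q := by field_simp

lemma mul_lt_mul_of_close {a b p q r s ρ δ : ℝ} (ha : 0 ≤ a) (hb : 0 < b) (hp : 0 < p)
    (hρ : ρ ≤ 1) (hr : r ≤ (1 + ρ) * p) (hs : (1 - ρ) * q ≤ s)
    (hgap : (1 + δ) * (p * b) ≤ a * q) (hρδ : 1 + ρ < (1 + δ) * (1 - ρ)) :
    b * r < a * s := by
  have hρ' : 0 ≤ 1 - ρ := by linarith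
  calc b * r ≤ b * ((1 + ρ) * p) := by gcongr
    _ = (1 + ρ) * (p * b) := by ring
    _ < (1 + δ) * (1 - ρ) * (p * b) := by gcongr
    _ = (1 - ρ) * ((1 + δ) * (p * b)) := by ring
    _ ≤ (1 - ρ) * (a * q) := by gcongr
    _ = a * ((1 - ρ) * q) := by ring
    _ ≤ a * s := by gcongr

theorem pts_truthful_when_R_close_general
    {X : Type*}
    (Pr R : X → ℝ) (post : X → X → ℝ) (o : X) (ρ δ : ℝ)
    (hPr : ∀ x, 0 < Pr x) (hR : ∀ x, 0 < R x)
    (hpost : ∀ x y, 0 < post x y)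
    (hρ1 : ρ < 1)
    (hclose : ∀ x, (1 - ρ) * Pr x ≤ R x ∧ R x ≤ (1 + ρ) * Pr x)
    (hδpos : 0 < δ)
    (hgap : ∀ y, y ≠ o → δ ≤ (post o o / Pr o) * (Pr y / post o y) - 1)
    (hρδ : ρ < δ / (2 + δ)) :
    ∀ y, y ≠ o → post o o / R o > post o y / R y := by
  intro y hy
  have hcross : (1 + δ) * (Pr o * post o y) ≤ post o o * Pr y :=
    mul_le_mul_of_le_div_mul_div (hPr o) (hpost o y) (by linarith [hgap y hy])
  rw [gt_iff_lt, div_lt_div_iff₀ (hR y) (hR o)]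
  exact mul_lt_mul_of_close (hpost o o).le (hpost o y) (hPr o) hρ1.le (hclose o).2 (hclose y).1
    hcross (one_add_lt_one_add_mul_one_sub (by linarith) hρδ)

/-- If `R` is ρ-close to the common prior `Pr`, the gap δ(o) of the self-prediction
is positive, and ρ < δ(o)/(2+δ(o)), then truthful reporting maximizes the expected
Peer Truth Serum payment. -/
theorem pts_truthful_when_R_close
    {X : Type*} [Fintype X]
    (Pr R : X → ℝ) (post : X → X → ℝ) (o : X) (ρ δ : ℝ)
    (hPr : ∀ x, 0 < Pr x) (hR : ∀ x, 0 < R x)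
    (hpost : ∀ x y, 0 < post x y)
    (hρ0 : 0 ≤ ρ) (hρ1 : ρ < 1)
    (hclose : ∀ x, (1 - ρ) * Pr x ≤ R x ∧ R x ≤ (1 + ρ) * Pr x)
    (hδpos : 0 < δ)
    (hgap : ∀ y, y ≠ o → δ ≤ (post o o / Pr o) * (Pr y / post o y) - 1)
    (hρδ : ρ < δ / (2 + δ)) :
    ∀ y, y ≠ o → post o o / R o > post o y / R y :=
  pts_truthful_when_R_close_general Pr R post o ρ δ hPr hR hpost hρ1 hclose hδpos hgap hρδ
end

section
/- The self-predicting condition implies stochastic relevance: if Pr is fully mixed and for every observation o, Pr[o|o]/Pr[o] > Pr[x|o]/Pr[x] for all x ≠ o, then for any two distinct observations o ≠ o', the posterior distributions Pr[·|o] and Pr[·|o'] are distinct. -/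
theorem self_predicting_implies_stochastic_relevance_general
    {X : Type*}
    (Pr : X → ℝ) (post : X → X → ℝ)
    (hsp : ∀ o x, x ≠ o → post o o / Pr o > post o x / Pr x) :
    ∀ o o', o ≠ o' → ∃ z, post o z ≠ post o' z := by
  intro o o' hne
  by_contra! hsame
  have h₁ := hsp o o' hne.symm
  have h₂ := hsp o' o hne
  rw [funext hsame] at h₁
  exact lt_asymm h₁ h₂

/-- The self-predicting condition implies stochastic relevance. -/
theorem self_predicting_implies_stochastic_relevance
    {X : Type*} [Fintype X]
    (Pr : X → ℝ) (post : X → X → ℝ)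
    (hPr : ∀ x, 0 < Pr x)
    (hsp : ∀ o x, x ≠ o → post o o / Pr o > post o x / Pr x) :
    ∀ o o', o ≠ o' → ∃ z, post o z ≠ post o' z :=
  self_predicting_implies_stochastic_relevance_general Pr post hsp
end

section
/- Suppose Pr is fully mixed, posteriors satisfy the self-predicting condition, and R = Pr. For the payment τ(r,rr) = f(rr) + g(r,rr) with g(r,rr) = 0 for r ≠ rr and g(x,x) = C/Pr[x]: truthful reporting is a strict best response against a truthful peer for every observation if and only if C > 0. -/
theorem mul_lt_mul_left_iff_pos_of_lt {R : Type*} [Ring R] [LinearOrder R] [IsStrictOrderedRing R]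
    {a b c : R} (hab : a < b) : c * a < c * b ↔ 0 < c :=
  ⟨fun h => lt_of_not_ge fun hc => (mul_le_mul_of_nonpos_left hab.le hc).not_gt h,
    fun hc => mul_lt_mul_of_pos_left hab hc⟩

theorem pts_truthful_iff_C_pos_general
    {X : Type*} [Fintype X] [Nontrivial X]
    (Pr : X → ℝ) (post : X → X → ℝ) (f : X → ℝ) (C : ℝ)
    (hsp : ∀ o x, x ≠ o → post o o / Pr o > post o x / Pr x) :
    (∀ o y, y ≠ o →
        (∑ z, post o z * f z) + post o o * (C / Pr o) >
        (∑ z, post o z * f z) + post o y * (C / Pr y))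
      ↔ 0 < C := by
  have truthful_gain_iff : ∀ o y, y ≠ o →
      ((∑ z, post o z * f z) + post o o * (C / Pr o) >
        (∑ z, post o z * f z) + post o y * (C / Pr y) ↔ 0 < C) := by
    intro o y hy
    rw [gt_iff_lt, add_lt_add_iff_left, mul_div_left_comm, mul_div_left_comm (post o o)]
    exact mul_lt_mul_left_iff_pos_of_lt (hsp o y hy)
  obtain ⟨o, y, hne⟩ := exists_pair_ne X
  exact ⟨fun h => (truthful_gain_iff o y hne.symm).1 (h o y hne.symm),
    fun hC o' y' hy => (truthful_gain_iff o' y' hy).2 hC⟩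

/-- With R = Pr and self-predicting posteriors, the PTS-form payment with diagonal
g(x,x) = C/Pr[x] makes truthful reporting a strict best response against a truthful
peer (for every observation) if and only if C > 0. -/
theorem pts_truthful_iff_C_pos
    {X : Type*} [Fintype X] [Nontrivial X]
    (Pr : X → ℝ) (post : X → X → ℝ) (f : X → ℝ) (C : ℝ)
    (hPr : ∀ x, 0 < Pr x) (hsum : ∑ x, Pr x = 1)
    (hpost : ∀ o z, 0 < post o z) (hpostsum : ∀ o, ∑ z, post o z = 1)
    (hsp : ∀ o x, x ≠ o → post o o / Pr o > post o x / Pr x) :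
    (∀ o y, y ≠ o →
        (∑ z, post o z * f z) + post o o * (C / Pr o) >
        (∑ z, post o z * f z) + post o y * (C / Pr y))
      ↔ 0 < C :=
  pts_truthful_iff_C_pos_general Pr post f C hsp
end

section
/- Let R be a fully mixed distribution on X = {x, y, z} and 0 < ε < min(R[y], 1 − R[z]). Define Pr[x] = R[x], Pr[y] = R[y] − ε, Pr[z] = R[z] + ε and posteriors Pr[x|y] = 0, Pr[y|y] = (Pr[y]+δ)·k, Pr[z|y] = (Pr[z]−δ)·k with k = 1/(Pr[y]+Pr[z]). Then for all sufficiently small δ > 0, the PTS expected reward for misreporting z upon observing y exceeds that for truthful reporting: Pr[z|y]/R[z] > Pr[y|y]/R[y]. -/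
/-! Writing `t = ε - δ > 0` and `k = 1 / (Pr[y] + Pr[z])`, the reward for reporting `z` is
`k (1 + t / R[z]) > k`, while the truthful reward is `k (1 - t / R[y]) < k`. -/

lemma sub_mul_div_lt_add_mul_div {a b t k : ℝ} (ha : 0 < a) (hb : 0 < b) (ht : 0 < t)
    (hk : 0 < k) : (a - t) * k / a < (b + t) * k / b :=
  calc (a - t) * k / a < k := by rw [div_lt_iff₀ ha]; nlinarith
    _ < (b + t) * k / b := by rw [lt_div_iff₀ hb]; nlinarith

theorem uninformed_prior_misreport_better_general
    (Ry Rz ε : ℝ)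
    (hRy : 0 < Ry) (hRz : 0 < Rz)
    (hε0 : 0 < ε) :
    ∃ δ₀ > 0, ∀ δ : ℝ, 0 < δ → δ < δ₀ →
      ((Rz + ε) - δ) * (1 / ((Ry - ε) + (Rz + ε))) / Rz >
      ((Ry - ε) + δ) * (1 / ((Ry - ε) + (Rz + ε))) / Ry := by
  refine ⟨ε, hε0, fun δ _ hδε => ?_⟩
  have hk : 0 < 1 / ((Ry - ε) + (Rz + ε)) := one_div_pos.2 (by linarith)
  rw [show (Rz + ε) - δ = Rz + (ε - δ) by ring, show (Ry - ε) + δ = Ry - (ε - δ) by ring]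
  exact sub_mul_div_lt_add_mul_div hRy hRz (sub_pos.2 hδε) hk

/-- Counterexample construction for uninformed priors: for all sufficiently small
δ > 0, misreporting z after observing y yields a strictly higher PTS expected
reward than truthful reporting. -/
theorem uninformed_prior_misreport_better
    (Rx Ry Rz ε : ℝ)
    (hRx : 0 < Rx) (hRy : 0 < Ry) (hRz : 0 < Rz)
    (hRsum : Rx + Ry + Rz = 1)
    (hε0 : 0 < ε) (hεy : ε < Ry) (hεz : ε < 1 - Rz) :
    ∃ δ₀ > 0, ∀ δ : ℝ, 0 < δ → δ < δ₀ →
      ((Rz + ε) - δ) * (1 / ((Ry - ε) + (Rz + ε))) / Rz >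
      ((Ry - ε) + δ) * (1 / ((Ry - ε) + (Rz + ε))) / Ry :=
  uninformed_prior_misreport_better_general Ry Rz ε hRy hRz hε0
end

section
/- For the quadratic (Brier) scoring rule S(R, x_s) = 2R[x_s] − Σ_x R[x]², the induced payment τ(r, rr, R) = ∂S(R, rr)/∂R[r] equals 2 − 2R[r] if r = rr and −2R[r] otherwise; and if the posterior satisfies the linear self-predicting condition Pr[o|o] − Pr[o] > Pr[x|o] − Pr[x] for all x ≠ o, then with R = Pr, truthful reporting o strictly maximizes the expected payment Σ_z Pr[z|o]·τ(y,z,Pr) over reports y against a truthful peer. -/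
/-! The payment is the partial derivative of `2 R[rr] - Σₓ R[x]²` in the coordinate `R[r]`,
namely `2·[r = rr] - 2 R[r]`. Against a truthful peer the expected payment of report `y` is
therefore `2 Pr[y|o] - 2 Pr[y]`, which the self-predicting condition makes largest at `y = o`. -/

open Finset Function

section Derivative

variable {𝕜 X : Type*} [NontriviallyNormedField 𝕜] [DecidableEq X]

theorem hasDerivAt_update_apply (f : X → 𝕜) (r x : X) (a : 𝕜) :
    HasDerivAt (fun u => update f r u x) (if r = x then 1 else 0) a := by
  by_cases h : r = x
  · subst h
    simpa using hasDerivAt_id' a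
  · simpa [h, update_of_ne (Ne.symm h)] using hasDerivAt_const a (f x)

theorem hasDerivAt_sum_sq_update [Fintype X] (f : X → 𝕜) (r : X) (a : 𝕜) :
    HasDerivAt (fun u => ∑ x, update f r u x ^ 2) (2 * a) a := by
  have hsq (x : X) : HasDerivAt (fun u => update f r u x ^ 2)
      ((2 : ℕ) * update f r a x ^ 1 * (if r = x then 1 else 0)) a :=
    (hasDerivAt_update_apply f r x a).fun_pow 2
  refine (HasDerivAt.fun_sum fun x _ => hsq x).congr_deriv ?_
  simp

theorem hasDerivAt_quadraticScore_update [Fintype X] (f : X → 𝕜) (r rr : X) (a : 𝕜) :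
    HasDerivAt (fun u => 2 * update f r u rr - ∑ x, update f r u x ^ 2)
      (2 * (if r = rr then 1 else 0) - 2 * a) a :=
  ((hasDerivAt_update_apply f r rr a).const_mul 2).sub (hasDerivAt_sum_sq_update f r a)

end Derivative

theorem sum_mul_quadraticPayment {X : Type*} [Fintype X] [DecidableEq X]
    (p R : X → ℝ) (hp : ∑ z, p z = 1) (y : X) :
    ∑ z, p z * (if y = z then 2 - 2 * R y else -2 * R y) = 2 * p y - 2 * R y := by
  have hsplit (z : X) : p z * (if y = z then 2 - 2 * R y else -2 * R y)
      = (if y = z then 2 * p z else 0) - 2 * R y * p z := by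
    split_ifs <;> ring
  simp only [hsplit, sum_sub_distrib, sum_ite_eq, mem_univ, if_true, ← mul_sum, hp, mul_one]

theorem quadratic_score_pts_general
    {X : Type*} [Fintype X] [DecidableEq X]
    (Pr : X → ℝ) (post : X → X → ℝ)
    (hpostsum : ∀ o, ∑ z, post o z = 1)
    (hsp : ∀ o x, x ≠ o → post o o - Pr o > post o x - Pr x) :
    (∀ r rr : X,
      HasDerivAt
        (fun u : ℝ => 2 * Function.update Pr r u rr - ∑ x, (Function.update Pr r u x) ^ 2)
        (if r = rr then 2 - 2 * Pr r else -2 * Pr r) (Pr r)) ∧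
    (∀ o y, y ≠ o →
      (∑ z, post o z * (if o = z then 2 - 2 * Pr o else -2 * Pr o)) >
      (∑ z, post o z * (if y = z then 2 - 2 * Pr y else -2 * Pr y))) := by
  refine ⟨fun r rr => ?_, fun o y hy => ?_⟩
  · refine (hasDerivAt_quadraticScore_update Pr r rr (Pr r)).congr_deriv ?_
    split_ifs <;> ring
  · rw [sum_mul_quadraticPayment _ _ (hpostsum o), sum_mul_quadraticPayment _ _ (hpostsum o)]
    linarith [hsp o y hy]

/-- For the quadratic (Brier) scoring rule, the induced payment is 2 − 2R[r] on
agreement and −2R[r] otherwise; and under the linear self-predicting condition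
(with R = Pr), truthful reporting strictly maximizes the expected payment against
a truthful peer. -/
theorem quadratic_score_pts
    {X : Type*} [Fintype X] [DecidableEq X]
    (Pr : X → ℝ) (post : X → X → ℝ)
    (hPr : ∀ x, 0 < Pr x) (hPrsum : ∑ x, Pr x = 1)
    (hpostsum : ∀ o, ∑ z, post o z = 1)
    (hsp : ∀ o x, x ≠ o → post o o - Pr o > post o x - Pr x) :
    (∀ r rr : X,
      HasDerivAt
        (fun u : ℝ => 2 * Function.update Pr r u rr - ∑ x, (Function.update Pr r u x) ^ 2)
        (if r = rr then 2 - 2 * Pr r else -2 * Pr r) (Pr r)) ∧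
    (∀ o y, y ≠ o →
      (∑ z, post o z * (if o = z then 2 - 2 * Pr o else -2 * Pr o)) >
      (∑ z, post o z * (if y = z then 2 - 2 * Pr y else -2 * Pr y))) :=
  quadratic_score_pts_general Pr post hpostsum hsp
end
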